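/- Let (ν,J) be an unrestricted rigged configuration, a ∈ Ī fixed, p the stable value of the vacancy number p_i^{(a)} for large i, and s the smallest nonpositive label occurring in (ν,J)^{(a)} (with s = 0 if all labels are positive). Then φ_a(ν,J) = p − s, i.e., f_a can be applied exactly p − s times to (ν,J) before becoming undefined. -/
import Mathlib


/-- Cartan pairing `(α_a | α_b)` of type `A_{n-1}`. -/
def cartanA (a b : ℕ) : ℤ :=
  if a = b then 2 else if a + 1 = b ∨ b + 1 = a then -1 else 0

/-- The data of a rigged configuration: for each component `b` and each string length `i`,
the multiset `J b i` of labels (riggings) of the strings of length `i` in the `b`-th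
rigged partition.  In particular `m_i^{(b)} = (J b i).card`. -/
abbrev RCdata := ℕ → ℕ → Multiset ℤ

/-- The vacancy number `p_i^{(a)} = Σ_j min(i,j) L_j^{(a)} − Σ_{(b,j)} (α_a|α_b) min(i,j) m_j^{(b)}`. -/
noncomputable def vac (L : ℕ → ℕ → ℕ) (J : RCdata) (a i : ℕ) : ℤ :=
  (∑' j : ℕ, ((min i j : ℕ) : ℤ) * (L a j : ℤ)) -
    ∑' b : ℕ, ∑' j : ℕ, cartanA a b * ((min i j : ℕ) : ℤ) * ((J b j).card : ℤ)

/-- A valid (unrestricted) rigged configuration: every label is at most the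
corresponding vacancy number. -/
def Valid (L : ℕ → ℕ → ℕ) (J : RCdata) : Prop :=
  ∀ b i x, x ∈ J b i → x ≤ vac L J b i

/-- Support conditions: only components `1,…,n-1` occur, strings have positive length,
and all string lengths are bounded. -/
def Supp (n : ℕ) (J : RCdata) : Prop :=
  (∀ b i, (b = 0 ∨ n ≤ b) → J b i = 0) ∧ (∀ b, J b 0 = 0) ∧
    ∃ B, ∀ b i, B < i → J b i = 0

/-- `f_a` with selected string `(k,s)`: `s` is the smallest nonpositive rigging in
`(ν,J)^{(a)}` and `k` the largest length of a string with rigging `s` (or `k = 0`, `s = 0`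
if no nonpositive rigging exists, in which case a new string `(1,-1)` is created).
A box is added to this string, all other colabels are kept fixed (so a label of a string
of length `i > k` in component `b` changes by `−(α_a|α_b)`), and the new label is `s − 1`.
`f_a` is undefined if the result is not a valid unrestricted rigged configuration. -/
def FStepAt (L : ℕ → ℕ → ℕ) (a : ℕ) (s : ℤ) (k : ℕ) (J J' : RCdata) : Prop :=
  s ≤ 0 ∧
  (∀ i x, x ∈ J a i → x ≤ 0 → s ≤ x) ∧
  ((s ∈ J a k ∧ ∀ i, k < i → s ∉ J a i) ∨
    (k = 0 ∧ s = 0 ∧ ∀ i x, x ∈ J a i → 0 < x)) ∧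
  (J' = fun b i =>
    if b = a ∧ i = k then (J a k).erase s
    else if b = a ∧ i = k + 1 then
      Multiset.map (fun x => x - cartanA a b * (if k < i then 1 else 0)) (J b i) + {s - 1}
    else Multiset.map (fun x => x - cartanA a b * (if k < i then 1 else 0)) (J b i)) ∧
  Valid L J'

/-- The crystal operator `f_a` as a relation. -/
def FStep (L : ℕ → ℕ → ℕ) (a : ℕ) (J J' : RCdata) : Prop :=
  ∃ s k, FStepAt L a s k J J'

/-- `e_a` with selected string `(k,s)`: `s` is the smallest negative rigging in
`(ν,J)^{(a)}` and `k` the smallest length of a string with rigging `s`.  A box is removed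
from this string, all other colabels are kept fixed (so a label of a string of length
`i ≥ k` in component `b` changes by `+(α_a|α_b)`), and the new label is `s + 1`
(a string of length `0` disappears).  `e_a` is undefined if no negative rigging exists. -/
def EStepAt (L : ℕ → ℕ → ℕ) (a : ℕ) (s : ℤ) (k : ℕ) (J J' : RCdata) : Prop :=
  s < 0 ∧ 1 ≤ k ∧ s ∈ J a k ∧
  (∀ i x, x ∈ J a i → x < 0 → s ≤ x) ∧
  (∀ i, i < k → s ∉ J a i) ∧
  (J' = fun b i =>
    if b = a ∧ i = k then Multiset.map (fun x => x + 2) ((J a k).erase s)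
    else if b = a ∧ i + 1 = k then J b i + (if k = 1 then 0 else {s + 1})
    else Multiset.map (fun x => x + cartanA a b * (if k ≤ i then 1 else 0)) (J b i))

/-- The crystal operator `e_a` as a relation. -/
def EStep (L : ℕ → ℕ → ℕ) (a : ℕ) (J J' : RCdata) : Prop :=
  ∃ s k, EStepAt L a s k J J'

/-- Highest weight rigged configuration: all riggings are nonnegative (and valid). -/
def HW (L : ℕ → ℕ → ℕ) (J : RCdata) : Prop :=
  Valid L J ∧ ∀ b i x, x ∈ J b i → 0 ≤ x

/-- Membership in `RC(L)`: generated from a highest weight rigged configuration by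
the operators `e_a`, `f_a`, `a ∈ {1,…,n-1}`. -/
def Gen (n : ℕ) (L : ℕ → ℕ → ℕ) (J : RCdata) : Prop :=
  ∃ J0, HW L J0 ∧ Supp n J0 ∧
    Relation.ReflTransGen
      (fun x y => ∃ a, 1 ≤ a ∧ a ≤ n - 1 ∧ (FStep L a x y ∨ EStep L a x y)) J0 J

/-- There is a chain of `q` successive applications of `f_a` starting at `J`. -/
def FChainLen (L : ℕ → ℕ → ℕ) (a : ℕ) (J : RCdata) (q : ℕ) : Prop :=
  ∃ d : ℕ → RCdata, d 0 = J ∧ ∀ j < q, FStep L a (d j) (d (j + 1))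

/-- There is a chain of `q` successive applications of `e_a` starting at `J`. -/
def EChainLen (L : ℕ → ℕ → ℕ) (a : ℕ) (J : RCdata) (q : ℕ) : Prop :=
  ∃ d : ℕ → RCdata, d 0 = J ∧ ∀ j < q, EStep L a (d j) (d (j + 1))

/-- `φ_a(ν,J) = q`: `f_a` can be applied exactly `q` times. -/
def PhiEq (L : ℕ → ℕ → ℕ) (a : ℕ) (J : RCdata) (q : ℕ) : Prop :=
  FChainLen L a J q ∧ ¬ FChainLen L a J (q + 1)

/-- `ε_a(ν,J) = q`: `e_a` can be applied exactly `q` times. -/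
def EpsEq (L : ℕ → ℕ → ℕ) (a : ℕ) (J : RCdata) (q : ℕ) : Prop :=
  EChainLen L a J q ∧ ¬ EChainLen L a J (q + 1)

lemma cartanA_comm (a b : ℕ) : cartanA a b = cartanA b a := by
  unfold cartanA; split_ifs <;> omega

lemma cartanA_self (a : ℕ) : cartanA a a = 2 := by simp [cartanA]

lemma cartanA_nonpos {a b : ℕ} (h : b ≠ a) : cartanA a b ≤ 0 := by
  unfold cartanA; split_ifs <;> omega

lemma tsum_eq_range {f : ℕ → ℤ} (M : ℕ) (h : ∀ j, M ≤ j → f j = 0) :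
    ∑' j, f j = ∑ j ∈ Finset.range M, f j :=
  tsum_eq_sum (fun j hj => h j (by simpa using hj))

lemma vac_eq_sum (L : ℕ → ℕ → ℕ) (J : RCdata) (a i : ℕ) (n M : ℕ)
    (hLs : ∀ j, M ≤ j → L a j = 0)
    (hJs : ∀ b j, M ≤ j → J b j = 0)
    (hJb : ∀ b, n ≤ b → ∀ j, J b j = 0) :
    vac L J a i = (∑ j ∈ Finset.range M, ((min i j : ℕ):ℤ) * (L a j : ℤ))
      - ∑ b ∈ Finset.range n, ∑ j ∈ Finset.range M,
          cartanA a b * ((min i j : ℕ):ℤ) * ((J b j).card : ℤ) := by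
  unfold vac
  congr 1
  · exact tsum_eq_range M (fun j hj => by rw [hLs j hj]; simp)
  · rw [tsum_eq_sum (s := Finset.range n) ?_]
    · exact Finset.sum_congr rfl fun b _ =>
        tsum_eq_range M (fun j hj => by rw [hJs b j hj]; simp)
    · intro b hb
      have h0 : ∀ j, J b j = 0 := fun j => hJb b (by simpa using hb) j
      simp [h0]

lemma vac_zero (L : ℕ → ℕ → ℕ) (J : RCdata) (a : ℕ) : vac L J a 0 = 0 := by
  unfold vac
  simp

lemma sum_min_sd (g : ℕ → ℤ) (i M : ℕ) (h1 : 1 ≤ i) (h2 : i < M) :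
    ∑ j ∈ Finset.range M, ((min (i-1) j : ℕ):ℤ) * g j
      + ∑ j ∈ Finset.range M, ((min (i+1) j : ℕ):ℤ) * g j
    = 2 * ∑ j ∈ Finset.range M, ((min i j : ℕ):ℤ) * g j - g i := by
  have key : ∀ j ∈ Finset.range M,
      ((min (i-1) j : ℕ):ℤ) * g j + ((min (i+1) j : ℕ):ℤ) * g j
      = 2 * (((min i j : ℕ):ℤ) * g j) + (if j = i then -g i else 0) := by
    intro j _
    have hc : ((min (i-1) j : ℕ):ℤ) + ((min (i+1) j : ℕ):ℤ)
        = 2 * ((min i j : ℕ):ℤ) + (if j = i then -1 else 0) := by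
      split_ifs with hj <;> omega
    split_ifs at hc ⊢ with hj
    · subst hj; linear_combination g j * hc
    · linear_combination g j * hc
  rw [← Finset.sum_add_distrib, Finset.sum_congr rfl key, Finset.sum_add_distrib,
    Finset.sum_ite_eq' (Finset.range M) i (fun _ => -g i),
    if_pos (Finset.mem_range.mpr h2), Finset.mul_sum]
  ring

lemma vac_sd (L : ℕ → ℕ → ℕ) (J : RCdata) (a i n : ℕ) (h1 : 1 ≤ i)
    (hL : ∃ B, ∀ b j, B < j → L b j = 0)
    (hJs : ∃ B, ∀ b j, B < j → J b j = 0)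
    (hJb : ∀ b, n ≤ b → ∀ j, J b j = 0) :
    vac L J a (i-1) + vac L J a (i+1)
      = 2 * vac L J a i - (L a i : ℤ)
        + ∑ b ∈ Finset.range n, cartanA a b * ((J b i).card : ℤ) := by
  obtain ⟨BL, hBL⟩ := hL
  obtain ⟨BJ, hBJ⟩ := hJs
  set M := max (max BL BJ + 1) (i + 2) with hM
  have hLs : ∀ j, M ≤ j → L a j = 0 := fun j hj => hBL a j (by omega)
  have hJs' : ∀ b j, M ≤ j → J b j = 0 := fun b j hj => hBJ b j (by omega)
  have hiM : i < M := by omega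
  rw [vac_eq_sum L J a (i-1) n M hLs hJs' hJb, vac_eq_sum L J a (i+1) n M hLs hJs' hJb,
    vac_eq_sum L J a i n M hLs hJs' hJb]
  have hA := sum_min_sd (fun j => (L a j : ℤ)) i M h1 hiM
  have hC : ∀ i' : ℕ,
      (∑ b ∈ Finset.range n, ∑ j ∈ Finset.range M,
        cartanA a b * ((min i' j : ℕ):ℤ) * ((J b j).card : ℤ))
      = ∑ b ∈ Finset.range n, ∑ j ∈ Finset.range M,
          ((min i' j : ℕ):ℤ) * (cartanA a b * ((J b j).card : ℤ)) :=
    fun i' => Finset.sum_congr rfl fun b _ => Finset.sum_congr rfl fun j _ => by ring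
  have hB : (∑ b ∈ Finset.range n, ∑ j ∈ Finset.range M,
        cartanA a b * ((min (i-1) j : ℕ):ℤ) * ((J b j).card : ℤ))
      + (∑ b ∈ Finset.range n, ∑ j ∈ Finset.range M,
        cartanA a b * ((min (i+1) j : ℕ):ℤ) * ((J b j).card : ℤ))
      = 2 * (∑ b ∈ Finset.range n, ∑ j ∈ Finset.range M,
        cartanA a b * ((min i j : ℕ):ℤ) * ((J b j).card : ℤ))
        - ∑ b ∈ Finset.range n, cartanA a b * ((J b i).card : ℤ) := by
    rw [hC, hC, hC, ← Finset.sum_add_distrib,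
      Finset.sum_congr rfl (fun b _ =>
        sum_min_sd (fun j => cartanA a b * ((J b j).card : ℤ)) i M h1 hiM),
      Finset.sum_sub_distrib, ← Finset.mul_sum]
  linarith [hA, hB]

lemma conv_of_empty (L : ℕ → ℕ → ℕ) (J : RCdata) (a i n : ℕ) (h1 : 1 ≤ i)
    (hL : ∃ B, ∀ b j, B < j → L b j = 0)
    (hJs : ∃ B, ∀ b j, B < j → J b j = 0)
    (hJb : ∀ b, n ≤ b → ∀ j, J b j = 0)
    (he : J a i = 0) :
    vac L J a (i-1) + vac L J a (i+1) ≤ 2 * vac L J a i := by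
  rw [vac_sd L J a i n h1 hL hJs hJb]
  have hsum : ∑ b ∈ Finset.range n, cartanA a b * ((J b i).card : ℤ) ≤ 0 := by
    apply Finset.sum_nonpos
    intro b _
    by_cases hba : b = a
    · subst hba; rw [he]; simp
    · have h2 := cartanA_nonpos hba
      have h3 : (0:ℤ) ≤ ((J b i).card : ℤ) := by positivity
      nlinarith
  have hLnn : (0:ℤ) ≤ (L a i : ℤ) := by positivity
  linarith

lemma lemD (P : ℕ → ℤ) (k N : ℕ) (p c s : ℤ)
    (hNE : ∀ i, k < i → P i ≤ s → P (i-1) + P (i+1) ≤ 2 * P i)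
    (hst : ∀ i, N ≤ i → P i = p)
    (hpc : p ≤ c) (hcs : c ≤ s) :
    ∀ i, k ≤ i → P i ≤ c ∧ P i ≤ P (i + 1) := by
  have main : ∀ d i, k + 1 ≤ i → N ≤ i + d → P i ≤ c ∧ P i ≤ P (i+1) := by
    intro d
    induction d with
    | zero =>
      intro i _ hNi
      rw [hst i (by omega), hst (i+1) (by omega)]
      exact ⟨hpc, le_refl _⟩
    | succ d ih =>
      intro i hki hNi
      by_cases hN : N ≤ i
      · rw [hst i hN, hst (i+1) (by omega)]; exact ⟨hpc, le_refl _⟩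
      · have IH := ih (i+1) (by omega) (by omega)
        have hcv := hNE (i+1) (by omega) (le_trans IH.1 hcs)
        simp only [Nat.add_sub_cancel] at hcv
        exact ⟨by linarith [IH.1, IH.2], by linarith [IH.2]⟩
  intro i hik
  rcases Nat.lt_or_ge k i with h | h
  · exact main N i (by omega) (by omega)
  · have hik' : i = k := by omega
    subst hik'
    have H1 := main N (i+1) (by omega) (by omega)
    have hcv := hNE (i+1) (by omega) (le_trans H1.1 hcs)
    simp only [Nat.add_sub_cancel] at hcv
    exact ⟨by linarith [H1.1, H1.2], by linarith [H1.2]⟩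

lemma lemU (P : ℕ → ℤ) (k N : ℕ) (p s : ℤ)
    (hNE : ∀ i, k < i → P i ≤ s → P (i-1) + P (i+1) ≤ 2 * P i)
    (hst : ∀ i, N ≤ i → P i = p)
    (hk : s ≤ P k) (h1 : P (k+1) ≤ s) : p ≤ s := by
  have main : ∀ j, P (k+1+j) ≤ s ∧ P (k+1+j+1) ≤ P (k+1+j) := by
    intro j
    induction j with
    | zero =>
      refine ⟨h1, ?_⟩
      have hcv := hNE (k+1) (by omega) h1
      simp only [Nat.add_sub_cancel] at hcv
      simp only [Nat.add_zero]
      linarith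
    | succ j ih =>
      have hle : P (k+1+(j+1)) ≤ s := le_trans ih.2 ih.1
      have hcv := hNE (k+1+j+1) (by omega) (by
        have : k+1+(j+1) = k+1+j+1 := by ring
        rwa [this] at hle)
      simp only [Nat.add_sub_cancel] at hcv
      have e1 : k+1+(j+1) = k+1+j+1 := by ring
      rw [e1] at hle
      simp only [e1]
      exact ⟨hle, by linarith [ih.2]⟩
  have := (main N).1
  rw [hst (k+1+N) (by omega)] at this
  exact this

def fNext (J : RCdata) (a : ℕ) (s : ℤ) (k : ℕ) : RCdata := fun b i =>
  if b = a ∧ i = k then (J a k).erase s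
  else if b = a ∧ i = k + 1 then
    Multiset.map (fun x => x - cartanA a b * (if k < i then 1 else 0)) (J b i) + {s - 1}
  else Multiset.map (fun x => x - cartanA a b * (if k < i then 1 else 0)) (J b i)

lemma fNext_card (J : RCdata) (a : ℕ) (s : ℤ) (k : ℕ)
    (hcase : (s ∈ J a k ∧ 1 ≤ k) ∨ (k = 0 ∧ J a k = 0)) (b j : ℕ) :
    (((fNext J a s k) b j).card : ℤ) = ((J b j).card : ℤ)
      + (if b = a ∧ j = k+1 then 1 else 0) - (if b = a ∧ j = k ∧ 1 ≤ k then 1 else 0) := by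
  unfold fNext
  by_cases hb : b = a
  · subst hb
    by_cases h1 : j = k
    · subst h1
      rcases hcase with ⟨hs, hk⟩ | ⟨hk0, h0⟩
      · have hc : 1 ≤ (J b j).card := Multiset.card_pos_iff_exists_mem.mpr ⟨s, hs⟩
        simp only [and_self, if_true, eq_self_iff_true, Multiset.card_erase_of_mem hs,
          show ¬(j = j+1) from by omega, and_false, false_and, if_false, hk, and_true,
          Nat.pred_eq_sub_one]
        push_cast
        omega
      · subst hk0
        simp [h0]
    · by_cases h2 : j = k + 1
      · subst h2
        simp only [show ¬(k+1 = k) from by omega, and_false, if_false, and_self, if_true,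
          eq_self_iff_true, and_true, Multiset.card_add, Multiset.card_map,
          Multiset.card_singleton, show ¬(k + 1 = k ∧ 1 ≤ k) from by omega]
        simp
      · simp only [h1, h2, and_false, false_and, if_false, and_self, eq_self_iff_true,
          true_and, Multiset.card_map, if_neg h1, if_neg h2]
        simp [h1, h2]
  · simp only [hb, false_and, if_false, Multiset.card_map]
    simp [hb]

lemma sum_sum_ite (n M a' j' : ℕ) (ha : a' < n) (hj : j' < M) (f : ℕ → ℕ → ℤ) :
    ∑ b ∈ Finset.range n, ∑ j ∈ Finset.range M,
      (if b = a' ∧ j = j' then f b j else 0) = f a' j' := by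
  rw [Finset.sum_eq_single a']
  · rw [Finset.sum_eq_single j']
    · simp
    · intro j _ hne; simp [hne]
    · intro h; exact absurd (Finset.mem_range.mpr hj) h
  · intro b _ hne; simp [hne]
  · intro h; exact absurd (Finset.mem_range.mpr ha) h

lemma fNext_supp_j (J : RCdata) (a : ℕ) (s : ℤ) (k : ℕ) {BJ : ℕ}
    (hBJ : ∀ b j, BJ < j → J b j = 0) :
    ∀ b j, max BJ (k+1) < j → fNext J a s k b j = 0 := by
  intro b j hj
  unfold fNext
  have h1 : ¬ (b = a ∧ j = k) := by omega
  have h2 : ¬ (b = a ∧ j = k + 1) := by omega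
  rw [if_neg h1, if_neg h2, hBJ b j (by omega)]
  simp

lemma fNext_supp_b (J : RCdata) (a : ℕ) (s : ℤ) (k n : ℕ) (hn : a < n)
    (hJb : ∀ b, n ≤ b → ∀ j, J b j = 0) :
    ∀ b, n ≤ b → ∀ j, fNext J a s k b j = 0 := by
  intro b hb j
  unfold fNext
  have hba : ¬ b = a := by omega
  have h1 : ¬ (b = a ∧ j = k) := by simp [hba]
  have h2 : ¬ (b = a ∧ j = k + 1) := by simp [hba]
  rw [if_neg h1, if_neg h2, hJb b hb j]
  simp

lemma vac_next (L : ℕ → ℕ → ℕ) (J : RCdata) (a : ℕ) (s : ℤ) (k n : ℕ) (hn : a < n)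
    (hL : ∃ B, ∀ b j, B < j → L b j = 0)
    (hJs : ∃ B, ∀ b j, B < j → J b j = 0)
    (hJb : ∀ b, n ≤ b → ∀ j, J b j = 0)
    (hcase : (s ∈ J a k ∧ 1 ≤ k) ∨ (k = 0 ∧ J a k = 0)) (b i : ℕ) :
    vac L (fNext J a s k) b i = vac L J b i - cartanA b a * (if k < i then 1 else 0) := by
  obtain ⟨BL, hBL⟩ := hL
  obtain ⟨BJ, hBJ⟩ := hJs
  set M := max (max BL (max BJ (k+1)) + 1) (k + 2) with hM
  have hLs : ∀ j, M ≤ j → L b j = 0 := fun j hj => hBL b j (by omega)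
  have hJs' : ∀ b' j, M ≤ j → J b' j = 0 := fun b' j hj => hBJ b' j (by omega)
  have hJs'' : ∀ b' j, M ≤ j → fNext J a s k b' j = 0 := fun b' j hj =>
    fNext_supp_j J a s k hBJ b' j (by omega)
  rw [vac_eq_sum L (fNext J a s k) b i n M hLs hJs'' (fNext_supp_b J a s k n hn hJb),
    vac_eq_sum L J b i n M hLs hJs' hJb]
  have hpt : ∀ b' j, cartanA b b' * ((min i j : ℕ):ℤ) * (((fNext J a s k) b' j).card : ℤ)
      = cartanA b b' * ((min i j : ℕ):ℤ) * ((J b' j).card : ℤ)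
        + (if b' = a ∧ j = k+1 then cartanA b b' * ((min i j : ℕ):ℤ) else 0)
        - (if b' = a ∧ j = k ∧ 1 ≤ k then cartanA b b' * ((min i j : ℕ):ℤ) else 0) := by
    intro b' j
    rw [fNext_card J a s k hcase b' j]
    split_ifs <;> ring
  have hsplit : (∑ b' ∈ Finset.range n, ∑ j ∈ Finset.range M,
        cartanA b b' * ((min i j : ℕ):ℤ) * (((fNext J a s k) b' j).card : ℤ))
      = (∑ b' ∈ Finset.range n, ∑ j ∈ Finset.range M,
          cartanA b b' * ((min i j : ℕ):ℤ) * ((J b' j).card : ℤ))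
        + cartanA b a * ((min i (k+1) : ℕ):ℤ)
        - (if 1 ≤ k then cartanA b a * ((min i k : ℕ):ℤ) else 0) := by
    rw [Finset.sum_congr rfl (fun b' _ => Finset.sum_congr rfl (fun j _ => hpt b' j))]
    simp only [Finset.sum_add_distrib, Finset.sum_sub_distrib]
    rw [sum_sum_ite n M a (k+1) hn (by omega) (fun b' j => cartanA b b' * ((min i j : ℕ):ℤ))]
    congr 1
    by_cases hk1 : 1 ≤ k
    · rw [if_pos hk1]
      have : ∀ b' j, (if b' = a ∧ j = k ∧ 1 ≤ k then cartanA b b' * ((min i j : ℕ):ℤ) else 0)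
          = (if b' = a ∧ j = k then cartanA b b' * ((min i j : ℕ):ℤ) else 0) := by
        intro b' j; simp [hk1, and_assoc]
      rw [Finset.sum_congr rfl (fun b' _ => Finset.sum_congr rfl (fun j _ => this b' j)),
        sum_sum_ite n M a k hn (by omega) (fun b' j => cartanA b b' * ((min i j : ℕ):ℤ))]
    · rw [if_neg hk1]
      have : ∀ b' j, (if b' = a ∧ j = k ∧ 1 ≤ k then cartanA b b' * ((min i j : ℕ):ℤ) else 0)
          = 0 := by
        intro b' j; simp [hk1]
      rw [Finset.sum_congr rfl (fun b' _ => Finset.sum_congr rfl (fun j _ => this b' j))]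
      simp
  rw [hsplit]
  have harith : cartanA b a * ((min i (k+1) : ℕ):ℤ)
      - (if 1 ≤ k then cartanA b a * ((min i k : ℕ):ℤ) else 0)
      = cartanA b a * (if k < i then 1 else 0) := by
    by_cases hk1 : 1 ≤ k
    · rw [if_pos hk1]
      have : ((min i (k+1) : ℕ):ℤ) - ((min i k : ℕ):ℤ) = (if k < i then 1 else 0) := by
        split_ifs <;> omega
      linear_combination cartanA b a * this
    · rw [if_neg hk1]
      have hk0 : k = 0 := by omega
      subst hk0
      have : ((min i 1 : ℕ):ℤ) = (if 0 < i then 1 else 0) := by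
        split_ifs <;> omega
      rw [this]
      ring
  linear_combination -harith

def KP (J : RCdata) (a : ℕ) (s : ℤ) (k : ℕ) : Prop :=
  (s ∈ J a k ∧ 1 ≤ k ∧ ∀ i, k < i → s ∉ J a i) ∨
    (k = 0 ∧ s = 0 ∧ ∀ i x, x ∈ J a i → 0 < x)

lemma exists_k (J : RCdata) (a : ℕ) (s : ℤ)
    (hJs : ∃ B, ∀ b i, B < i → J b i = 0) (hJ0 : ∀ b, J b 0 = 0)
    (hs1 : s ≤ 0) (hs2 : ∀ i x, x ∈ J a i → x ≤ 0 → s ≤ x)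
    (hs3 : (∃ i, s ∈ J a i) ∨ s = 0) :
    ∃ k, KP J a s k := by
  obtain ⟨B, hB⟩ := hJs
  by_cases hex : ∃ i, s ∈ J a i
  · obtain ⟨i0, hi0⟩ := hex
    have hmem_le : ∀ i, s ∈ J a i → i ≤ B := by
      intro i hi
      by_contra h
      rw [hB a i (by omega)] at hi
      exact Multiset.notMem_zero s hi
    set T := (Finset.range (B+1)).filter (fun i => s ∈ J a i) with hT
    have hi0T : i0 ∈ T := by
      simp only [hT, Finset.mem_filter, Finset.mem_range]
      exact ⟨by have := hmem_le i0 hi0; omega, hi0⟩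
    refine ⟨T.max' ⟨i0, hi0T⟩, Or.inl ?_⟩
    have hkT : T.max' ⟨i0, hi0T⟩ ∈ T := T.max'_mem _
    simp only [hT, Finset.mem_filter, Finset.mem_range] at hkT
    refine ⟨hkT.2, ?_, ?_⟩
    · by_contra h
      have hk0 : T.max' ⟨i0, hi0T⟩ = 0 := by omega
      rw [hk0, hJ0 a] at hkT
      exact Multiset.notMem_zero s hkT.2
    · intro i hi hmem
      have hiT : i ∈ T := by
        simp only [hT, Finset.mem_filter, Finset.mem_range]
        exact ⟨by have := hmem_le i hmem; omega, hmem⟩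
      have := Finset.le_max' T i hiT
      omega
  · have hs0 : s = 0 := by
      rcases hs3 with ⟨i, hi⟩ | h
      · exact absurd ⟨i, hi⟩ hex
      · exact h
    refine ⟨0, Or.inr ⟨rfl, hs0, ?_⟩⟩
    intro i x hx
    by_contra h
    have hx0 : x ≤ 0 := by omega
    have := hs2 i x hx hx0
    have hxs : x = s := by omega
    exact hex ⟨i, hxs ▸ hx⟩

lemma hNE_of (L : ℕ → ℕ → ℕ) (J : RCdata) (a : ℕ) (s : ℤ) (k n : ℕ)
    (hL : ∃ B, ∀ b j, B < j → L b j = 0)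
    (hJs : ∃ B, ∀ b j, B < j → J b j = 0)
    (hJb : ∀ b, n ≤ b → ∀ j, J b j = 0)
    (hValid : Valid L J) (hs1 : s ≤ 0)
    (hs2 : ∀ i x, x ∈ J a i → x ≤ 0 → s ≤ x)
    (hK : KP J a s k) :
    ∀ i, k < i → vac L J a i ≤ s → vac L J a (i-1) + vac L J a (i+1) ≤ 2 * vac L J a i := by
  intro i hki hvi
  have hempty : J a i = 0 := by
    by_contra hne
    obtain ⟨x, hx⟩ := Multiset.exists_mem_of_ne_zero hne
    have hxv := hValid a i x hx
    rcases le_or_gt x 0 with hx0 | hx0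
    · have hsx := hs2 i x hx hx0
      have hxs : x ≠ s := by
        intro h
        rcases hK with ⟨_, _, hmax⟩ | ⟨_, _, hpos⟩
        · exact hmax i hki (h ▸ hx)
        · have := hpos i x hx; omega
      omega
    · omega
  exact conv_of_empty L J a i n (by omega) hL hJs hJb hempty

lemma hk_of (L : ℕ → ℕ → ℕ) (J : RCdata) (a : ℕ) (s : ℤ) (k : ℕ)
    (hValid : Valid L J) (hK : KP J a s k) : s ≤ vac L J a k := by
  rcases hK with ⟨hmem, _, _⟩ | ⟨hk0, hs0, _⟩
  · exact hValid a k s hmem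
  · rw [hk0, vac_zero, hs0]

lemma key_iff (L : ℕ → ℕ → ℕ) (J : RCdata) (a : ℕ) (s : ℤ) (k n N : ℕ) (p : ℤ)
    (hL : ∃ B, ∀ b j, B < j → L b j = 0)
    (hJs : ∃ B, ∀ b j, B < j → J b j = 0)
    (hJb : ∀ b, n ≤ b → ∀ j, J b j = 0)
    (hValid : Valid L J) (hs1 : s ≤ 0)
    (hs2 : ∀ i x, x ∈ J a i → x ≤ 0 → s ≤ x)
    (hK : KP J a s k)
    (hp : ∀ i, N ≤ i → vac L J a i = p) :
    (s + 1 ≤ vac L J a (k+1) ↔ s + 1 ≤ p) ∧ s ≤ p := by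
  have hNE := hNE_of L J a s k n hL hJs hJb hValid hs1 hs2 hK
  have hk := hk_of L J a s k hValid hK
  have hsp : s ≤ p := by
    by_contra h
    have h' : p ≤ s - 1 := by omega
    have := (lemD (vac L J a) k N p (s-1) s hNE hp h' (by omega) k le_rfl).1
    omega
  refine ⟨⟨?_, ?_⟩, hsp⟩
  · intro h
    by_contra h'
    have h'' : p ≤ s := by omega
    have := (lemD (vac L J a) k N p s s hNE hp h'' le_rfl (k+1) (by omega)).1
    omega
  · intro h
    by_contra h'
    have h'' : vac L J a (k+1) ≤ s := by omega
    have := lemU (vac L J a) k N p s hNE hp hk h''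
    omega

lemma fNext_mem_succ (J : RCdata) (a : ℕ) (s : ℤ) (k : ℕ) :
    s - 1 ∈ fNext J a s k a (k+1) := by
  unfold fNext
  rw [if_neg (by omega), if_pos ⟨rfl, rfl⟩]
  simp

lemma fstep_forward (n : ℕ) (L : ℕ → ℕ → ℕ) (a : ℕ) (J : RCdata)
    (hn : 2 ≤ n) (ha1 : 1 ≤ a) (ha2 : a ≤ n - 1)
    (hL : ∃ B, ∀ b i, B < i → L b i = 0)
    (hSupp : Supp n J) (hValid : Valid L J)
    (s : ℤ) (hs1 : s ≤ 0) (hs2 : ∀ i x, x ∈ J a i → x ≤ 0 → s ≤ x)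
    (hs3 : (∃ i, s ∈ J a i) ∨ s = 0)
    (p : ℤ) (N : ℕ) (hp : ∀ i, N ≤ i → vac L J a i = p)
    (J' : RCdata) (hstep : FStep L a J J') :
    (s + 1 ≤ p) ∧ Supp n J' ∧ Valid L J' ∧
    (∀ i x, x ∈ J' a i → x ≤ 0 → s - 1 ≤ x) ∧
    (∃ i, s - 1 ∈ J' a i) ∧
    (∃ N', ∀ i, N' ≤ i → vac L J' a i = p - 2) := by
  obtain ⟨s₀, k, h1, h2, h3, heq, hvalid'⟩ := hstep
  have han : a < n := by omega
  have hJb : ∀ b, n ≤ b → ∀ j, J b j = 0 := fun b hb j => hSupp.1 b j (Or.inr hb)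
  have hJ0 : ∀ b, J b 0 = 0 := hSupp.2.1
  have hJs : ∃ B, ∀ b i, B < i → J b i = 0 := hSupp.2.2
  -- s₀ = s
  have hs0eq : s₀ = s := by
    rcases h3 with ⟨hmem, hmax⟩ | ⟨hk0, hs00, hpos⟩
    · have hA : s ≤ s₀ := hs2 k s₀ hmem h1
      have hB : s₀ ≤ s := by
        rcases hs3 with ⟨i0, hi0⟩ | h0
        · exact h2 i0 s hi0 hs1
        · omega
      omega
    · rcases hs3 with ⟨i0, hi0⟩ | h0
      · have := hpos i0 s hi0; omega
      · omega
  subst hs0eq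
  -- KP
  have hK : KP J a s₀ k := by
    rcases h3 with ⟨hmem, hmax⟩ | hb
    · refine Or.inl ⟨hmem, ?_, hmax⟩
      by_contra h
      have hk0 : k = 0 := by omega
      rw [hk0, hJ0 a] at hmem
      exact Multiset.notMem_zero s₀ hmem
    · exact Or.inr hb
  have hcase : (s₀ ∈ J a k ∧ 1 ≤ k) ∨ (k = 0 ∧ J a k = 0) := by
    rcases hK with ⟨hmem, hk1, _⟩ | ⟨hk0, _, _⟩
    · exact Or.inl ⟨hmem, hk1⟩
    · exact Or.inr ⟨hk0, hk0 ▸ hJ0 a⟩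
  have heq' : J' = fNext J a s₀ k := heq
  subst heq'
  have vnext := vac_next L J a s₀ k n han hL hJs hJb hcase
  -- key inequality
  have hmem1 : s₀ - 1 ∈ fNext J a s₀ k a (k+1) := fNext_mem_succ J a s₀ k
  have hval1 := hvalid' a (k+1) (s₀ - 1) hmem1
  rw [vnext a (k+1), if_pos (by omega), cartanA_comm a a, cartanA_self] at hval1
  have hkey := key_iff L J a s₀ k n N p hL hJs hJb hValid h1 h2 hK hp
  have hsp : s₀ + 1 ≤ p := hkey.1.mp (by omega)
  refine ⟨hsp, ?_, hvalid', ?_, ⟨k+1, hmem1⟩, ?_⟩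
  · -- Supp n (fNext J a s₀ k)
    obtain ⟨B, hB⟩ := hJs
    refine ⟨?_, ?_, max B (k+1), fNext_supp_j J a s₀ k hB⟩
    · intro b i hb
      have hba : ¬ b = a := by omega
      unfold fNext
      rw [if_neg (by simp [hba]), if_neg (by simp [hba]), hSupp.1 b i hb]
      simp
    · intro b
      unfold fNext
      by_cases hbk : b = a ∧ 0 = k
      · rw [if_pos hbk, ← hbk.2, hJ0 a]
        simp
      · rw [if_neg hbk, if_neg (by omega), hJ0 b]
        simp
  · -- new min label property
    intro i x hx hx0
    have hgen : ∀ y : ℤ, y ∈ J a i → k < i → s₀ - 1 ≤ y - 2 := by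
      intro y hy hki
      rcases le_or_gt y 0 with hy0 | hy0
      · have := hs2 i y hy hy0
        have hne : y ≠ s₀ := by
          intro h
          rcases hK with ⟨_, _, hmax⟩ | ⟨_, _, hpos⟩
          · exact hmax i hki (h ▸ hy)
          · have := hpos i y hy; omega
        omega
      · omega
    unfold fNext at hx
    by_cases hik : a = a ∧ i = k
    · rw [if_pos hik] at hx
      have := hs2 k x (Multiset.mem_of_mem_erase hx) (by omega)
      omega
    · rw [if_neg hik] at hx
      by_cases hik1 : a = a ∧ i = k + 1
      · rw [if_pos hik1] at hx
        rcases Multiset.mem_add.mp hx with hx' | hx'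
        · obtain ⟨y, hy, hxy⟩ := Multiset.mem_map.mp hx'
          rw [cartanA_self, if_pos (by omega)] at hxy
          have := hgen y hy (by omega)
          omega
        · rw [Multiset.mem_singleton] at hx'
          omega
      · rw [if_neg hik1] at hx
        obtain ⟨y, hy, hxy⟩ := Multiset.mem_map.mp hx
        rw [cartanA_self] at hxy
        by_cases hki : k < i
        · rw [if_pos hki] at hxy
          have := hgen y hy hki
          omega
        · rw [if_neg hki] at hxy
          have := hs2 i y hy (by omega)
          omega
  · -- stable vacancy
    refine ⟨max N (k+1), fun i hi => ?_⟩
    rw [vnext a i, if_pos (by omega), cartanA_comm a a, cartanA_self, hp i (by omega)]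
    ring

lemma fstep_exists (n : ℕ) (L : ℕ → ℕ → ℕ) (a : ℕ) (J : RCdata)
    (hn : 2 ≤ n) (ha1 : 1 ≤ a) (ha2 : a ≤ n - 1)
    (hL : ∃ B, ∀ b i, B < i → L b i = 0)
    (hSupp : Supp n J) (hValid : Valid L J)
    (s : ℤ) (hs1 : s ≤ 0) (hs2 : ∀ i x, x ∈ J a i → x ≤ 0 → s ≤ x)
    (hs3 : (∃ i, s ∈ J a i) ∨ s = 0)
    (p : ℤ) (N : ℕ) (hp : ∀ i, N ≤ i → vac L J a i = p)
    (hsp : s + 1 ≤ p) :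
    ∃ J', FStep L a J J' := by
  have han : a < n := by omega
  have hJb : ∀ b, n ≤ b → ∀ j, J b j = 0 := fun b hb j => hSupp.1 b j (Or.inr hb)
  have hJ0 : ∀ b, J b 0 = 0 := hSupp.2.1
  have hJs : ∃ B, ∀ b i, B < i → J b i = 0 := hSupp.2.2
  obtain ⟨k, hK⟩ := exists_k J a s hJs hJ0 hs1 hs2 hs3
  have hcase : (s ∈ J a k ∧ 1 ≤ k) ∨ (k = 0 ∧ J a k = 0) := by
    rcases hK with ⟨hmem, hk1, _⟩ | ⟨hk0, _, _⟩
    · exact Or.inl ⟨hmem, hk1⟩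
    · exact Or.inr ⟨hk0, hk0 ▸ hJ0 a⟩
  have vnext := vac_next L J a s k n han hL hJs hJb hcase
  have hkey := key_iff L J a s k n N p hL hJs hJb hValid hs1 hs2 hK hp
  have hkv : s + 1 ≤ vac L J a (k+1) := hkey.1.mpr hsp
  refine ⟨fNext J a s k, s, k, hs1, hs2, ?_, rfl, ?_⟩
  · rcases hK with ⟨hmem, _, hmax⟩ | hb
    · exact Or.inl ⟨hmem, hmax⟩
    · exact Or.inr hb
  · -- Valid
    intro b i x hx
    rw [vnext b i]
    unfold fNext at hx
    by_cases hik : b = a ∧ i = k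
    · rw [if_pos hik] at hx
      have hxv := hValid a k x (Multiset.mem_of_mem_erase hx)
      rw [hik.1, hik.2, if_neg (by omega)]
      simpa using hxv
    · rw [if_neg hik] at hx
      by_cases hik1 : b = a ∧ i = k + 1
      · rw [if_pos hik1] at hx
        obtain ⟨hba, hik1'⟩ := hik1
        subst hba; subst hik1'
        rcases Multiset.mem_add.mp hx with hx' | hx'
        · obtain ⟨y, hy, hxy⟩ := Multiset.mem_map.mp hx'
          have hyv := hValid b (k+1) y hy
          rw [cartanA_self, if_pos (by omega)] at hxy
          rw [if_pos (by omega), cartanA_comm b b, cartanA_self]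
          omega
        · rw [Multiset.mem_singleton] at hx'
          rw [if_pos (by omega), cartanA_comm b b, cartanA_self]
          omega
      · rw [if_neg hik1] at hx
        obtain ⟨y, hy, hxy⟩ := Multiset.mem_map.mp hx
        have hyv := hValid b i y hy
        rw [cartanA_comm b a]
        by_cases hki : k < i
        · rw [if_pos hki] at hxy ⊢
          omega
        · rw [if_neg hki] at hxy ⊢
          omega

lemma main_aux (q : ℕ) : ∀ (n : ℕ) (L : ℕ → ℕ → ℕ) (a : ℕ) (J : RCdata),
    2 ≤ n → 1 ≤ a → a ≤ n - 1 →
    (∃ B, ∀ b i, B < i → L b i = 0) →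
    Supp n J → Valid L J →
    ∀ s : ℤ, s ≤ 0 → (∀ i x, x ∈ J a i → x ≤ 0 → s ≤ x) →
    ((∃ i, s ∈ J a i) ∨ s = 0) →
    ∀ (p : ℤ) (N : ℕ), (∀ i, N ≤ i → vac L J a i = p) →
    (FChainLen L a J q ↔ (q : ℤ) ≤ p - s) := by
  induction q with
  | zero =>
    intro n L a J hn ha1 ha2 hL hSupp hValid s hs1 hs2 hs3 p N hp
    have hJ0 : ∀ b, J b 0 = 0 := hSupp.2.1
    have hJs : ∃ B, ∀ b i, B < i → J b i = 0 := hSupp.2.2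
    have hJb : ∀ b, n ≤ b → ∀ j, J b j = 0 := fun b hb j => hSupp.1 b j (Or.inr hb)
    obtain ⟨k, hK⟩ := exists_k J a s hJs hJ0 hs1 hs2 hs3
    have hkey := key_iff L J a s k n N p hL hJs hJb hValid hs1 hs2 hK hp
    constructor
    · intro _
      have := hkey.2
      push_cast
      omega
    · intro _
      exact ⟨fun _ => J, rfl, fun j hj => absurd hj (by omega)⟩
  | succ q ih =>
    intro n L a J hn ha1 ha2 hL hSupp hValid s hs1 hs2 hs3 p N hp
    constructor
    · rintro ⟨d, hd0, hsteps⟩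
      have hstep0 : FStep L a J (d 1) := hd0 ▸ hsteps 0 (by omega)
      obtain ⟨hsp, hSupp', hValid', hs2', hs3', N', hp'⟩ :=
        fstep_forward n L a J hn ha1 ha2 hL hSupp hValid s hs1 hs2 hs3 p N hp (d 1) hstep0
      have hchain : FChainLen L a (d 1) q :=
        ⟨fun j => d (j+1), rfl, fun j hj => hsteps (j+1) (by omega)⟩
      have := (ih n L a (d 1) hn ha1 ha2 hL hSupp' hValid' (s-1) (by omega) hs2'
        (Or.inl hs3') (p-2) N' hp').mp hchain
      push_cast at this ⊢
      omega
    · intro hq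
      have hsp : s + 1 ≤ p := by push_cast at hq; omega
      obtain ⟨J', hstep⟩ :=
        fstep_exists n L a J hn ha1 ha2 hL hSupp hValid s hs1 hs2 hs3 p N hp hsp
      obtain ⟨_, hSupp', hValid', hs2', hs3', N', hp'⟩ :=
        fstep_forward n L a J hn ha1 ha2 hL hSupp hValid s hs1 hs2 hs3 p N hp J' hstep
      have hchain : FChainLen L a J' q := by
        apply (ih n L a J' hn ha1 ha2 hL hSupp' hValid' (s-1) (by omega) hs2'
          (Or.inl hs3') (p-2) N' hp').mpr
        push_cast at hq ⊢
        omega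
      obtain ⟨d', hd0', hsteps'⟩ := hchain
      refine ⟨fun j => Nat.casesOn j J (fun j' => d' j'), rfl, ?_⟩
      intro j hj
      cases j with
      | zero =>
        simpa [hd0'] using hstep
      | succ j =>
        exact hsteps' j (by omega)

/-- `φ_a(ν,J) = p − s`, where `p` is the stable value of the vacancy
number `p_i^{(a)}` for large `i` and `s` is the smallest nonpositive label occurring in
`(ν,J)^{(a)}` (with `s = 0` if all labels are positive): `f_a` can be applied exactly
`p − s` times, i.e. there is a chain of `q` applications of `f_a` iff `q ≤ p − s`. -/
theorem phi_eq_p_sub_s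
    (n : ℕ) (hn : 2 ≤ n) (L : ℕ → ℕ → ℕ) (J : RCdata)
    (a : ℕ) (ha1 : 1 ≤ a) (ha2 : a ≤ n - 1)
    (hL : ∃ B, ∀ b i, B < i → L b i = 0)
    (hSupp : Supp n J) (hValid : Valid L J)
    (hlb : ∀ b i x, x ∈ J b i → -(i : ℤ) ≤ x)
    (hconv : ∀ i, 1 ≤ i → J a i = 0 →
      vac L J a (i - 1) + vac L J a (i + 1) ≤ 2 * vac L J a i)
    (s : ℤ) (hs1 : s ≤ 0) (hs2 : ∀ i x, x ∈ J a i → x ≤ 0 → s ≤ x)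
    (hs3 : (∃ i, s ∈ J a i) ∨ s = 0)
    (p : ℤ) (N : ℕ) (hp : ∀ i, N ≤ i → vac L J a i = p) :
    ∀ q : ℕ, FChainLen L a J q ↔ (q : ℤ) ≤ p - s := by
  intro q
  exact main_aux q n L a J hn ha1 ha2 hL hSupp hValid s hs1 hs2 hs3 p N hp
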